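/- Let k be an algebraically closed field and let σ₁, σ₂ ∈ k[t] be nonconstant tamely ramified polynomials of degrees d₁, d₂ with d₁ ≥ 14·d₂. Let ω = f·(dt)^ν be a semi-invariant form of weight ν ≥ 1 for (σ₁, σ₂) whose conductor equals 2, say with ord_{y₁} f = e and ord_{y₂} f = e′ at the two distinct points y₁, y₂ ∈ k of its support, and suppose gcd(e, e′) = 1 (as holds when ω is a primitive). Then e = e′ = −1; consequently ν = 2 and f = c·((t − y₁)(t − y₂))^{−1} for some c ∈ k∖{0}. -/

import Mathlib

open Polynomial

/-- Substitution of a polynomial `σ` into a rational function `h`: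
if `h = p/q` then `h ∘ σ = (p ∘ σ)/(q ∘ σ)`. -/
noncomputable def ratComp {k : Type*} [Field k] (h : RatFunc k) (σ : k[X]) : RatFunc k :=
  algebraMap k[X] (RatFunc k) (h.num.comp σ) / algebraMap k[X] (RatFunc k) (h.denom.comp σ)

/-- The order of a rational function `f` at a point `a` of the affine line. -/
noncomputable def ordAt {k : Type*} [Field k] (f : RatFunc k) (a : k) : ℤ :=
  (f.num.rootMultiplicity a : ℤ) - (f.denom.rootMultiplicity a : ℤ)

/-- `f·(dt)^ν` is a semi-invariant form of weight `ν` for the correspondence `(σ₁, σ₂)`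
of the affine line: `f ≠ 0` and `σ₁*ω = λ·σ₂*ω` for some constant `λ ≠ 0`, i.e.
`(f∘σ₁)·(σ₁')^ν = λ·(f∘σ₂)·(σ₂')^ν`. -/
def SemiInvariant {k : Type*} [Field k] (σ₁ σ₂ : k[X]) (f : RatFunc k) (ν : ℤ) : Prop :=
  f ≠ 0 ∧ ∃ lam : k, lam ≠ 0 ∧
    ratComp f σ₁ * (algebraMap k[X] (RatFunc k) (derivative σ₁)) ^ ν
      = RatFunc.C lam *
        (ratComp f σ₂ * (algebraMap k[X] (RatFunc k) (derivative σ₂)) ^ ν)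

/-- A nonconstant polynomial `σ` is tamely ramified if `char k` does not divide its degree
and every root of `σ - c`, for every `c`, has multiplicity prime to `char k`. -/
def TamelyRamified {k : Type*} [Field k] (σ : k[X]) : Prop :=
  ¬ (ringChar k ∣ σ.natDegree) ∧
    ∀ c a : k, (σ - C c).IsRoot a → ¬ (ringChar k ∣ (σ - C c).rootMultiplicity a)

/-!
For tame `σ`, `ord_a (σ^* ω) = e_σ(a) (ord_{σ a} f + ν) - ν`, so the weight `φ = ord f + ν`
satisfies `φ(σ₁ a) e₁(a) = φ(σ₂ a) e₂(a)` for all `a`, and comparing degrees at `∞` gives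
`e + e' = -ν`: thus `φ(y₁) + φ(y₂) = ν` and `φ = ν` off `{y₁, y₂}`. If `φ(y₂) < 0`, every
`σ₁`-preimage of `y₂` is a `σ₂`-preimage of `y₂` with the same ramification, forcing `d₁ ≤ d₂`;
hence `0 < φ(yᵢ) < ν`. Away from the at most `3 d₂` points where `σ₂` ramifies or hits `y₁, y₂`
the balance reads `φ(σ₁ a) e₁(a) = ν`, so those `σ₁`-preimages of `y₂` are ramified. Riemann–Hurwitz
for `σ₁` (the two fibres have more than `d₁` points in total) then leaves a preimage `a` of `y₁`
outside that set, and `φ(y₁) e₁(a) = ν` gives `e' ∣ e`. Symmetrically `e ∣ e'`, and coprimality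
forces `e = e' = -1`.
-/

section OrdAt

variable {k : Type*} [Field k]

theorem ordAt_div_algebraMap {p q : k[X]} (hp : p ≠ 0) (hq : q ≠ 0) (a : k) :
    ordAt (algebraMap k[X] (RatFunc k) p / algebraMap k[X] (RatFunc k) q) a =
      (p.rootMultiplicity a : ℤ) - q.rootMultiplicity a := by
  set x := algebraMap k[X] (RatFunc k) p / algebraMap k[X] (RatFunc k) q
  have hx : x ≠ 0 := div_ne_zero (RatFunc.algebraMap_ne_zero hp) (RatFunc.algebraMap_ne_zero hq)
  have h := congrArg (rootMultiplicity a) ((RatFunc.num_mul_eq_mul_denom_iff (p := p) hq).mpr rfl)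
  rw [rootMultiplicity_mul (mul_ne_zero (RatFunc.num_ne_zero hx) hq),
    rootMultiplicity_mul (mul_ne_zero hp x.denom_ne_zero)] at h
  rw [ordAt]
  omega

theorem ordAt_algebraMap {p : k[X]} (hp : p ≠ 0) (a : k) :
    ordAt (algebraMap k[X] (RatFunc k) p) a = p.rootMultiplicity a := by
  have h1 : rootMultiplicity a (1 : k[X]) = 0 := by simp
  simpa [h1] using ordAt_div_algebraMap hp one_ne_zero a

theorem ordAt_C (c a : k) : ordAt (RatFunc.C c) a = 0 := by
  simp [ordAt]

theorem ordAt_mul {f g : RatFunc k} (hf : f ≠ 0) (hg : g ≠ 0) (a : k) :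
    ordAt (f * g) a = ordAt f a + ordAt g a := by
  have hnum := mul_ne_zero (RatFunc.num_ne_zero hf) (RatFunc.num_ne_zero hg)
  have hden := mul_ne_zero f.denom_ne_zero g.denom_ne_zero
  rw [← f.num_div_denom, ← g.num_div_denom, div_mul_div_comm, ← map_mul, ← map_mul,
    ordAt_div_algebraMap hnum hden, rootMultiplicity_mul hnum, rootMultiplicity_mul hden,
    f.num_div_denom, g.num_div_denom, ordAt, ordAt]
  push_cast
  ring

theorem ordAt_inv {f : RatFunc k} (hf : f ≠ 0) (a : k) : ordAt f⁻¹ a = -ordAt f a := by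
  have h := ordAt_mul hf (inv_ne_zero hf) a
  rw [mul_inv_cancel₀ hf, ← map_one RatFunc.C, ordAt_C] at h
  omega

theorem ordAt_zpow {f : RatFunc k} (hf : f ≠ 0) (n : ℤ) (a : k) :
    ordAt (f ^ n) a = n * ordAt f a := by
  have hpow (m : ℕ) : ordAt (f ^ m) a = m * ordAt f a := by
    induction m with
    | zero => simpa using ordAt_C 1 a
    | succ m ih =>
      rw [pow_succ, ordAt_mul (pow_ne_zero m hf) hf, ih]
      push_cast
      ring
  obtain ⟨m, rfl | rfl⟩ := n.eq_nat_or_neg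
  · simpa using hpow m
  · rw [zpow_neg, ordAt_inv (zpow_ne_zero _ hf), zpow_natCast, hpow]
    ring

theorem ordAt_X_sub_C_zpow [DecidableEq k] (y : k) (n : ℤ) (a : k) :
    ordAt (algebraMap k[X] (RatFunc k) (X - C y) ^ n) a = if a = y then n else 0 := by
  rw [ordAt_zpow (RatFunc.algebraMap_ne_zero (X_sub_C_ne_zero y)),
    ordAt_algebraMap (X_sub_C_ne_zero y), rootMultiplicity_X_sub_C]
  split_ifs <;> simp

theorem eq_C_of_forall_ordAt_eq_zero [IsAlgClosed k] {f : RatFunc k} (hf : f ≠ 0)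
    (h : ∀ a, ordAt f a = 0) : ∃ c : k, c ≠ 0 ∧ f = RatFunc.C c := by
  have hnum := RatFunc.num_ne_zero hf
  have hmult (a : k) : f.num.rootMultiplicity a = f.denom.rootMultiplicity a := by
    have := h a
    rw [ordAt] at this
    omega
  -- `num` and `denom` are coprime, so having the same roots they have none.
  have hroot (a : k) : ¬ f.num.IsRoot a ∧ ¬ f.denom.IsRoot a := by
    have hiff : f.num.IsRoot a ↔ f.denom.IsRoot a := by
      rw [← rootMultiplicity_pos hnum, ← rootMultiplicity_pos f.denom_ne_zero, hmult]
    rcases aeval_ne_zero_of_isCoprime f.isCoprime_num_denom a with h | h <;>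
      simp_all [IsRoot]
  have hnum0 : f.num.natDegree = 0 := IsAlgClosed.roots_eq_zero_iff_natDegree_eq_zero.mp
    (Multiset.eq_zero_of_forall_notMem fun a ha => (hroot a).1 (isRoot_of_mem_roots ha))
  have hden1 : f.denom = 1 := f.monic_denom.natDegree_eq_zero.mp
    (IsAlgClosed.roots_eq_zero_iff_natDegree_eq_zero.mp
      (Multiset.eq_zero_of_forall_notMem fun a ha => (hroot a).2 (isRoot_of_mem_roots ha)))
  obtain ⟨c, hc⟩ := natDegree_eq_zero.mp hnum0
  refine ⟨c, fun hc0 => hnum (by rw [← hc, hc0, C_0]), ?_⟩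
  rw [← f.num_div_denom, hden1, ← hc, map_one, div_one, RatFunc.algebraMap_C]

end OrdAt

namespace Polynomial

open Finset

variable {k : Type*} [Field k] {σ : k[X]}

open scoped Classical in
noncomputable def fiber (σ : k[X]) (y : k) : Finset k := (σ - C y).roots.toFinset

noncomputable def ramIdx (σ : k[X]) (a : k) : ℕ := rootMultiplicity a (σ - C (σ.eval a))

theorem sub_C_ne_zero (hσ : 0 < σ.natDegree) (y : k) : σ - C y ≠ 0 := by
  intro h
  have := natDegree_sub_C (p := σ) (a := y)
  rw [h, natDegree_zero] at this
  omega

theorem mem_fiber (hσ : 0 < σ.natDegree) {y a : k} : a ∈ σ.fiber y ↔ σ.eval a = y := by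
  simp [fiber, mem_roots (sub_C_ne_zero hσ y), sub_eq_zero]

theorem ramIdx_pos (hσ : 0 < σ.natDegree) (a : k) : 0 < σ.ramIdx a :=
  (rootMultiplicity_pos (sub_C_ne_zero hσ _)).mpr (by simp)

theorem card_fiber_le (y : k) : #(σ.fiber y) ≤ σ.natDegree := by
  classical
  exact (Multiset.toFinset_card_le _).trans ((card_roots' _).trans natDegree_sub_C.le)

theorem sum_rootMultiplicity_le (p : k[X]) (S : Finset k) :
    ∑ a ∈ S, p.rootMultiplicity a ≤ p.natDegree := by
  classical
  calc ∑ a ∈ S, p.rootMultiplicity a = ∑ a ∈ S, p.roots.count a := by simp [count_roots]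
    _ ≤ ∑ a ∈ S ∪ p.roots.toFinset, p.roots.count a := sum_le_sum_of_subset subset_union_left
    _ = Multiset.card p.roots := Multiset.sum_count_eq_card fun a ha =>
        mem_union_right _ (Multiset.mem_toFinset.mpr ha)
    _ ≤ p.natDegree := card_roots' p

theorem sum_ramIdx_le {y : k} {S : Finset k}
    (hS : ∀ a ∈ S, σ.eval a = y) : ∑ a ∈ S, σ.ramIdx a ≤ σ.natDegree := by
  rw [sum_congr rfl fun a ha => by rw [ramIdx, hS a ha], ← natDegree_sub_C (a := y)]
  exact sum_rootMultiplicity_le (σ - C y) S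

theorem sum_ramIdx_fiber [IsAlgClosed k] (hσ : 0 < σ.natDegree) (y : k) :
    ∑ a ∈ σ.fiber y, σ.ramIdx a = σ.natDegree := by
  classical
  rw [sum_congr rfl fun a ha => by rw [ramIdx, (mem_fiber hσ).mp ha], fiber]
  simp_rw [← count_roots]
  rw [Multiset.toFinset_sum_count_eq, IsAlgClosed.card_roots_eq_natDegree, natDegree_sub_C]

theorem two_mul_card_fiber_le [IsAlgClosed k] (hσ : 0 < σ.natDegree) {y : k} (T : Finset k)
    (h : ∀ a ∈ σ.fiber y, a ∉ T → 2 ≤ σ.ramIdx a) :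
    2 * #(σ.fiber y) ≤ σ.natDegree + #T := by
  classical
  calc 2 * #(σ.fiber y) = ∑ a ∈ σ.fiber y, 2 := by rw [sum_const, smul_eq_mul, mul_comm]
    _ ≤ ∑ a ∈ σ.fiber y, (σ.ramIdx a + if a ∈ T then 1 else 0) := by
      refine sum_le_sum fun a ha => ?_
      by_cases haT : a ∈ T
      · simpa [haT, Nat.one_le_iff_ne_zero] using (ramIdx_pos hσ a).ne'
      · simpa [haT] using h a ha haT
    _ = σ.natDegree + #({a ∈ σ.fiber y | a ∈ T}) := by
      rw [sum_add_distrib, sum_ramIdx_fiber hσ, sum_boole, Nat.cast_id]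
    _ ≤ σ.natDegree + #T := by
      gcongr
      exact fun a ha => (mem_filter.mp ha).2

theorem natDegree_pos_of_derivative_ne_zero (hσ' : derivative σ ≠ 0) : 0 < σ.natDegree :=
  Nat.pos_of_ne_zero fun h => hσ' (derivative_of_natDegree_zero h)

theorem ramIdx_le_rootMultiplicity_derivative_add_one (hσ' : derivative σ ≠ 0) (a : k) :
    σ.ramIdx a ≤ (derivative σ).rootMultiplicity a + 1 := by
  have h := rootMultiplicity_sub_one_le_derivative_rootMultiplicity_of_ne_zero
    (σ - C (σ.eval a)) a (by simpa using hσ')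
  rw [derivative_sub, derivative_C, sub_zero] at h
  exact Nat.le_add_of_sub_le h

theorem ramIdx_eq_one (hσ' : derivative σ ≠ 0) {a : k} (ha : ¬ (derivative σ).IsRoot a) :
    σ.ramIdx a = 1 := by
  have hσ := natDegree_pos_of_derivative_ne_zero hσ'
  have := ramIdx_le_rootMultiplicity_derivative_add_one hσ' a
  rw [rootMultiplicity_eq_zero ha] at this
  exact le_antisymm this (ramIdx_pos hσ a)

theorem natDegree_lt_card_fiber_add_card_fiber [IsAlgClosed k] (hσ' : derivative σ ≠ 0)
    {y₁ y₂ : k} (hy : y₁ ≠ y₂) : σ.natDegree < #(σ.fiber y₁) + #(σ.fiber y₂) := by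
  classical
  have hσ := natDegree_pos_of_derivative_ne_zero hσ'
  have hdisj : Disjoint (σ.fiber y₁) (σ.fiber y₂) := disjoint_left.mpr fun a h₁ h₂ =>
    hy (((mem_fiber hσ).mp h₁).symm.trans ((mem_fiber hσ).mp h₂))
  have hcrit := sum_rootMultiplicity_le (derivative σ) (σ.fiber y₁ ∪ σ.fiber y₂)
  have hdeg := natDegree_derivative_le σ
  suffices 2 * σ.natDegree < σ.natDegree + (#(σ.fiber y₁) + #(σ.fiber y₂)) by omega
  calc 2 * σ.natDegree = ∑ a ∈ σ.fiber y₁ ∪ σ.fiber y₂, σ.ramIdx a := by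
        rw [sum_union hdisj, sum_ramIdx_fiber hσ, sum_ramIdx_fiber hσ, two_mul]
    _ ≤ ∑ a ∈ σ.fiber y₁ ∪ σ.fiber y₂, ((derivative σ).rootMultiplicity a + 1) :=
        sum_le_sum fun a _ => ramIdx_le_rootMultiplicity_derivative_add_one hσ' a
    _ = ∑ a ∈ σ.fiber y₁ ∪ σ.fiber y₂, (derivative σ).rootMultiplicity a
          + (#(σ.fiber y₁) + #(σ.fiber y₂)) := by
        rw [sum_add_distrib, sum_const, smul_eq_mul, mul_one,
          card_union_of_disjoint hdisj]
    _ < σ.natDegree + (#(σ.fiber y₁) + #(σ.fiber y₂)) := by omega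

theorem comp_ne_zero {p : k[X]} (hp : p ≠ 0) (hσ : 0 < σ.natDegree) : p.comp σ ≠ 0 := by
  rw [Ne, comp_eq_zero_iff]
  rintro (h | ⟨-, h⟩)
  · exact hp h
  · rw [h, natDegree_C] at hσ
    exact hσ.ne rfl

theorem rootMultiplicity_comp {p : k[X]} (hp : p ≠ 0) (hσ : 0 < σ.natDegree) (a : k) :
    (p.comp σ).rootMultiplicity a = p.rootMultiplicity (σ.eval a) * σ.ramIdx a := by
  classical
  obtain ⟨q, hpq, hq⟩ := p.exists_eq_pow_rootMultiplicity_mul_and_not_dvd hp (σ.eval a)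
  have hqa : ¬ (q.comp σ).IsRoot a := by
    rwa [IsRoot, eval_comp, ← IsRoot, ← dvd_iff_isRoot]
  have hcomp : p.comp σ = (σ - C (σ.eval a)) ^ p.rootMultiplicity (σ.eval a) * q.comp σ := by
    conv_lhs => rw [hpq]
    rw [mul_comp, pow_comp, sub_comp, X_comp, C_comp]
  have hq0 : q.comp σ ≠ 0 := fun h => hqa (by simp [h])
  rw [hcomp, rootMultiplicity_mul (mul_ne_zero (pow_ne_zero _ (sub_C_ne_zero hσ _)) hq0),
    rootMultiplicity_eq_zero hqa, add_zero, ← count_roots, roots_pow, Multiset.count_nsmul,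
    count_roots, ramIdx]

end Polynomial

section Pullback

variable {k : Type*} [Field k] {σ : k[X]}

noncomputable def pullback (σ : k[X]) (ν : ℤ) (f : RatFunc k) : RatFunc k :=
  ratComp f σ * algebraMap k[X] (RatFunc k) (derivative σ) ^ ν

theorem ratComp_ne_zero {f : RatFunc k} (hf : f ≠ 0) (hσ : 0 < σ.natDegree) : ratComp f σ ≠ 0 :=
  div_ne_zero (RatFunc.algebraMap_ne_zero (comp_ne_zero (RatFunc.num_ne_zero hf) hσ))
    (RatFunc.algebraMap_ne_zero (comp_ne_zero f.denom_ne_zero hσ))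

theorem ordAt_ratComp {f : RatFunc k} (hf : f ≠ 0) (hσ : 0 < σ.natDegree) (a : k) :
    ordAt (ratComp f σ) a = ordAt f (σ.eval a) * σ.ramIdx a := by
  rw [ratComp, ordAt_div_algebraMap (comp_ne_zero (RatFunc.num_ne_zero hf) hσ)
    (comp_ne_zero f.denom_ne_zero hσ), rootMultiplicity_comp (RatFunc.num_ne_zero hf) hσ,
    rootMultiplicity_comp f.denom_ne_zero hσ, ordAt]
  push_cast
  ring

theorem intDegree_ratComp {f : RatFunc k} (hf : f ≠ 0) (hσ : 0 < σ.natDegree) :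
    (ratComp f σ).intDegree = f.intDegree * σ.natDegree := by
  rw [ratComp, RatFunc.intDegree_div
    (RatFunc.algebraMap_ne_zero (comp_ne_zero (RatFunc.num_ne_zero hf) hσ))
    (RatFunc.algebraMap_ne_zero (comp_ne_zero f.denom_ne_zero hσ)),
    RatFunc.intDegree_polynomial, RatFunc.intDegree_polynomial, natDegree_comp, natDegree_comp,
    RatFunc.intDegree]
  push_cast
  ring

theorem intDegree_zpow {x : RatFunc k} (hx : x ≠ 0) (n : ℤ) :
    (x ^ n).intDegree = n * x.intDegree := by
  have hpow (m : ℕ) : (x ^ m).intDegree = m * x.intDegree := by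
    induction m with
    | zero => simp
    | succ m ih =>
      rw [pow_succ, RatFunc.intDegree_mul (pow_ne_zero m hx) hx, ih]
      push_cast
      ring
  obtain ⟨m, rfl | rfl⟩ := n.eq_nat_or_neg
  · simpa using hpow m
  · rw [zpow_neg, RatFunc.intDegree_inv, zpow_natCast, hpow]
    ring

theorem natDegree_pos_of_not_ringChar_dvd (hd : ¬ ringChar k ∣ σ.natDegree) :
    0 < σ.natDegree :=
  Nat.pos_of_ne_zero fun h => hd (h ▸ dvd_zero _)

theorem coeff_derivative_natDegree_sub_one_ne_zero (hd : ¬ ringChar k ∣ σ.natDegree) :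
    (derivative σ).coeff (σ.natDegree - 1) ≠ 0 := by
  have hσ := natDegree_pos_of_not_ringChar_dvd hd
  rw [coeff_derivative, Nat.sub_add_cancel hσ, coeff_natDegree, Nat.cast_sub hσ, Nat.cast_one,
    sub_add_cancel]
  refine mul_ne_zero (leadingCoeff_ne_zero.mpr ?_) fun h => hd ((ringChar.spec k _).mp h)
  rintro rfl
  simp at hσ

theorem derivative_ne_zero_of_not_ringChar_dvd (hd : ¬ ringChar k ∣ σ.natDegree) :
    derivative σ ≠ 0 := fun h =>
  coeff_derivative_natDegree_sub_one_ne_zero hd (by rw [h, coeff_zero])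

theorem natDegree_derivative_of_not_ringChar_dvd (hd : ¬ ringChar k ∣ σ.natDegree) :
    (derivative σ).natDegree = σ.natDegree - 1 :=
  natDegree_eq_of_le_of_coeff_ne_zero (natDegree_derivative_le σ)
    (coeff_derivative_natDegree_sub_one_ne_zero hd)

theorem TamelyRamified.rootMultiplicity_derivative (ht : TamelyRamified σ) (a : k) :
    (derivative σ).rootMultiplicity a = σ.ramIdx a - 1 := by
  have hroot : (σ - C (σ.eval a)).IsRoot a := by simp
  have h := derivative_rootMultiplicity_of_root_of_mem_nonZeroDivisors hroot
    (mem_nonZeroDivisors_of_ne_zero fun h => ht.2 _ a hroot ((ringChar.spec k _).mp h))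
  rwa [derivative_sub, derivative_C, sub_zero] at h

theorem pullback_ne_zero (hd : ¬ ringChar k ∣ σ.natDegree) {f : RatFunc k} (hf : f ≠ 0)
    (ν : ℤ) : pullback σ ν f ≠ 0 :=
  mul_ne_zero (ratComp_ne_zero hf (natDegree_pos_of_not_ringChar_dvd hd))
    (zpow_ne_zero ν (RatFunc.algebraMap_ne_zero (derivative_ne_zero_of_not_ringChar_dvd hd)))

theorem TamelyRamified.ordAt_pullback (ht : TamelyRamified σ) {f : RatFunc k} (hf : f ≠ 0)
    (ν : ℤ) (a : k) :
    ordAt (pullback σ ν f) a = (ordAt f (σ.eval a) + ν) * σ.ramIdx a - ν := by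
  have hσ := natDegree_pos_of_not_ringChar_dvd ht.1
  have hσ' := derivative_ne_zero_of_not_ringChar_dvd ht.1
  have hσ'' := RatFunc.algebraMap_ne_zero hσ'
  rw [pullback, ordAt_mul (ratComp_ne_zero hf hσ) (zpow_ne_zero ν hσ''), ordAt_ratComp hf hσ,
    ordAt_zpow hσ'', ordAt_algebraMap hσ', ht.rootMultiplicity_derivative,
    Nat.cast_sub (ramIdx_pos hσ a)]
  push_cast
  ring

theorem intDegree_pullback (hd : ¬ ringChar k ∣ σ.natDegree) {f : RatFunc k} (hf : f ≠ 0)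
    (ν : ℤ) : (pullback σ ν f).intDegree = (f.intDegree + ν) * σ.natDegree - ν := by
  have hσ := natDegree_pos_of_not_ringChar_dvd hd
  have hσ' := RatFunc.algebraMap_ne_zero (derivative_ne_zero_of_not_ringChar_dvd hd)
  rw [pullback, RatFunc.intDegree_mul (ratComp_ne_zero hf hσ) (zpow_ne_zero ν hσ'),
    intDegree_ratComp hf hσ, intDegree_zpow hσ', RatFunc.intDegree_polynomial,
    natDegree_derivative_of_not_ringChar_dvd hd, Nat.cast_sub hσ]
  push_cast
  ring

end Pullback

section ConductorTwo

variable {k : Type*} [Field k] [IsAlgClosed k]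

theorem exists_eq_C_mul_zpow_mul_zpow {f : RatFunc k} (hf : f ≠ 0) {y₁ y₂ : k} (hy : y₁ ≠ y₂)
    (hout : ∀ b, b ≠ y₁ → b ≠ y₂ → ordAt f b = 0) :
    ∃ c : k, c ≠ 0 ∧ f = RatFunc.C c *
      (algebraMap k[X] (RatFunc k) (X - C y₁) ^ ordAt f y₁ *
        algebraMap k[X] (RatFunc k) (X - C y₂) ^ ordAt f y₂) := by
  classical
  set g := algebraMap k[X] (RatFunc k) (X - C y₁) ^ ordAt f y₁ *
    algebraMap k[X] (RatFunc k) (X - C y₂) ^ ordAt f y₂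
  have hX (y : k) := zpow_ne_zero (ordAt f y) (RatFunc.algebraMap_ne_zero (X_sub_C_ne_zero y))
  have hg : g ≠ 0 := mul_ne_zero (hX y₁) (hX y₂)
  obtain ⟨c, hc, hfg⟩ := eq_C_of_forall_ordAt_eq_zero (mul_ne_zero hf (inv_ne_zero hg)) fun a => by
    rw [ordAt_mul hf (inv_ne_zero hg), ordAt_inv hg, ordAt_mul (hX y₁) (hX y₂),
      ordAt_X_sub_C_zpow, ordAt_X_sub_C_zpow]
    by_cases h₁ : a = y₁
    · subst h₁
      simp [hy]
    · by_cases h₂ : a = y₂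
      · subst h₂
        simp [h₁]
      · simp [h₁, h₂, hout a h₁ h₂]
  exact ⟨c, hc, by rw [← hfg, inv_mul_cancel_right₀ hg]⟩

theorem intDegree_eq_ordAt_add_ordAt {f : RatFunc k} (hf : f ≠ 0) {y₁ y₂ : k} (hy : y₁ ≠ y₂)
    (hout : ∀ b, b ≠ y₁ → b ≠ y₂ → ordAt f b = 0) :
    f.intDegree = ordAt f y₁ + ordAt f y₂ := by
  obtain ⟨c, hc, hfc⟩ := exists_eq_C_mul_zpow_mul_zpow hf hy hout
  have hX (y : k) := RatFunc.algebraMap_ne_zero (X_sub_C_ne_zero y)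
  conv_lhs => rw [hfc]
  rw [RatFunc.intDegree_mul ((_root_.map_ne_zero _).mpr hc)
      (mul_ne_zero (zpow_ne_zero _ (hX y₁)) (zpow_ne_zero _ (hX y₂))),
    RatFunc.intDegree_mul (zpow_ne_zero _ (hX y₁)) (zpow_ne_zero _ (hX y₂)),
    intDegree_zpow (hX y₁), intDegree_zpow (hX y₂), RatFunc.intDegree_C,
    RatFunc.intDegree_polynomial, RatFunc.intDegree_polynomial, natDegree_X_sub_C,
    natDegree_X_sub_C]
  ring

end ConductorTwo

section BalancedWeight

open Finset

variable {k : Type*} [Field k] {σ₁ σ₂ : k[X]} {φ : k → ℤ}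

def IsBalancedWeight (σ₁ σ₂ : k[X]) (φ : k → ℤ) : Prop :=
  ∀ a, φ (σ₁.eval a) * σ₁.ramIdx a = φ (σ₂.eval a) * σ₂.ramIdx a

theorem SemiInvariant.isBalancedWeight {f : RatFunc k} {ν : ℤ} (hf : SemiInvariant σ₁ σ₂ f ν)
    (ht₁ : TamelyRamified σ₁) (ht₂ : TamelyRamified σ₂) :
    IsBalancedWeight σ₁ σ₂ (fun y => ordAt f y + ν) := by
  obtain ⟨hf0, lam, hlam, heq⟩ := hf
  change pullback σ₁ ν f = RatFunc.C lam * pullback σ₂ ν f at heq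
  intro a
  have h := congrArg (ordAt · a) heq
  simp only [ordAt_mul ((_root_.map_ne_zero RatFunc.C).mpr hlam) (pullback_ne_zero ht₂.1 hf0 ν),
    ordAt_C, zero_add, ht₁.ordAt_pullback hf0, ht₂.ordAt_pullback hf0] at h
  linarith

theorem SemiInvariant.intDegree_eq_neg {f : RatFunc k} {ν : ℤ} (hf : SemiInvariant σ₁ σ₂ f ν)
    (hd₁ : ¬ ringChar k ∣ σ₁.natDegree) (hd₂ : ¬ ringChar k ∣ σ₂.natDegree)
    (hne : σ₁.natDegree ≠ σ₂.natDegree) : f.intDegree = -ν := by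
  obtain ⟨hf0, lam, hlam, heq⟩ := hf
  change pullback σ₁ ν f = RatFunc.C lam * pullback σ₂ ν f at heq
  have h := congrArg RatFunc.intDegree heq
  rw [RatFunc.intDegree_mul ((_root_.map_ne_zero RatFunc.C).mpr hlam) (pullback_ne_zero hd₂ hf0 ν),
    RatFunc.intDegree_C, zero_add, intDegree_pullback hd₁ hf0, intDegree_pullback hd₂ hf0] at h
  have hprod : (f.intDegree + ν) * ((σ₁.natDegree : ℤ) - σ₂.natDegree) = 0 := by
    linear_combination h
  have hne' : (σ₁.natDegree : ℤ) - σ₂.natDegree ≠ 0 := by omega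
  linarith [(mul_eq_zero.mp hprod).resolve_right hne']

variable [IsAlgClosed k]

theorem IsBalancedWeight.natDegree_le_of_neg (hφ : IsBalancedWeight σ₁ σ₂ φ)
    (hσ₁ : 0 < σ₁.natDegree) {y : k} (hy : φ y < 0) (hφ_nonneg : ∀ b, b ≠ y → 0 ≤ φ b) :
    σ₁.natDegree ≤ σ₂.natDegree := by
  have key : ∀ a ∈ σ₁.fiber y, σ₂.eval a = y ∧ σ₁.ramIdx a = σ₂.ramIdx a := by
    intro a ha
    have h := hφ a
    rw [(mem_fiber hσ₁).mp ha] at h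
    have hneg : φ y * σ₁.ramIdx a < 0 :=
      mul_neg_of_neg_of_pos hy (by exact_mod_cast ramIdx_pos hσ₁ a)
    have h₂ : σ₂.eval a = y := by
      by_contra hne
      nlinarith [mul_nonneg (hφ_nonneg _ hne) (Nat.cast_nonneg (α := ℤ) (σ₂.ramIdx a))]
    rw [h₂] at h
    exact ⟨h₂, by exact_mod_cast mul_left_cancel₀ hy.ne h⟩
  calc σ₁.natDegree = ∑ a ∈ σ₁.fiber y, σ₁.ramIdx a := (sum_ramIdx_fiber hσ₁ y).symm
    _ = ∑ a ∈ σ₁.fiber y, σ₂.ramIdx a := sum_congr rfl fun a ha => (key a ha).2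
    _ ≤ σ₂.natDegree := sum_ramIdx_le fun a ha => (key a ha).1

theorem IsBalancedWeight.dvd_of_lt (hφ : IsBalancedWeight σ₁ σ₂ φ)
    (hσ₁' : derivative σ₁ ≠ 0) (hσ₂' : derivative σ₂ ≠ 0)
    (hdeg : 9 * σ₂.natDegree ≤ σ₁.natDegree) {ν : ℤ} {y₁ y₂ : k} (hy : y₁ ≠ y₂)
    (hout : ∀ b, b ≠ y₁ → b ≠ y₂ → φ b = ν) (hlt : φ y₂ < ν) : φ y₁ ∣ ν := by
  classical
  have hσ₁ := natDegree_pos_of_derivative_ne_zero hσ₁'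
  have hσ₂ := natDegree_pos_of_derivative_ne_zero hσ₂'
  have hT : #(σ₂.fiber y₁ ∪ σ₂.fiber y₂ ∪ (derivative σ₂).roots.toFinset) ≤
      3 * σ₂.natDegree := by
    have := card_union_le (σ₂.fiber y₁ ∪ σ₂.fiber y₂) (derivative σ₂).roots.toFinset
    have := card_union_le (σ₂.fiber y₁) (σ₂.fiber y₂)
    have := card_fiber_le (σ := σ₂) y₁
    have := card_fiber_le (σ := σ₂) y₂
    have := (Multiset.toFinset_card_le (derivative σ₂).roots).trans (card_roots' _)
    have := natDegree_derivative_le σ₂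
    omega
  set T := σ₂.fiber y₁ ∪ σ₂.fiber y₂ ∪ (derivative σ₂).roots.toFinset
  -- Off `T`, `σ₂` is unramified and avoids `{y₁, y₂}`, so the balance reads `φ (σ₁ a) e₁(a) = ν`.
  have hgood : ∀ a, a ∉ T → φ (σ₁.eval a) * σ₁.ramIdx a = ν := by
    intro a ha
    simp only [T, mem_union, not_or, mem_fiber hσ₂, Multiset.mem_toFinset,
      mem_roots hσ₂'] at ha
    obtain ⟨⟨h₁, h₂⟩, h₃⟩ := ha
    rw [hφ a, hout _ h₁ h₂, ramIdx_eq_one hσ₂' h₃, Nat.cast_one, mul_one]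
  have hram : ∀ a ∈ σ₁.fiber y₂, a ∉ T → 2 ≤ σ₁.ramIdx a := by
    intro a ha haT
    have h := hgood a haT
    rw [(mem_fiber hσ₁).mp ha] at h
    by_contra! hle
    have h₁ : σ₁.ramIdx a = 1 := by have := ramIdx_pos hσ₁ a; omega
    rw [h₁, Nat.cast_one, mul_one] at h
    exact hlt.ne h
  obtain ⟨a, ha, haT⟩ : ∃ a ∈ σ₁.fiber y₁, a ∉ T := by
    by_contra! hsub
    have h₁ : #(σ₁.fiber y₁) ≤ #T := card_le_card hsub
    have h₂ := two_mul_card_fiber_le hσ₁ T hram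
    have h₃ := natDegree_lt_card_fiber_add_card_fiber hσ₁' hy
    omega
  exact ⟨σ₁.ramIdx a, by rw [← hgood a haT, (mem_fiber hσ₁).mp ha]⟩

theorem IsBalancedWeight.pos_and_dvd (hφ : IsBalancedWeight σ₁ σ₂ φ)
    (hσ₁' : derivative σ₁ ≠ 0) (hσ₂' : derivative σ₂ ≠ 0)
    (hdeg : 9 * σ₂.natDegree ≤ σ₁.natDegree) {ν : ℤ} (hν : 0 ≤ ν) {y₁ y₂ : k} (hy : y₁ ≠ y₂)
    (hout : ∀ b, b ≠ y₁ → b ≠ y₂ → φ b = ν) (hsum : φ y₁ + φ y₂ = ν)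
    (hne₁ : φ y₁ ≠ 0) (hne₂ : φ y₂ ≠ 0) : 0 < φ y₁ ∧ φ y₁ ∣ φ y₂ := by
  have hσ₁ := natDegree_pos_of_derivative_ne_zero hσ₁'
  have hnonneg : ∀ {z z' : k}, z ≠ z' → (∀ b, b ≠ z → b ≠ z' → φ b = ν) →
      φ z + φ z' = ν → 0 ≤ φ z := by
    intro z z' hz hout' hsum'
    by_contra! hneg
    have := hφ.natDegree_le_of_neg hσ₁ hneg fun b hb => by
      by_cases hb' : b = z'
      · rw [hb']
        omega
      · rw [hout' b hb hb']
        exact hν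
    omega
  have h₁ : 0 < φ y₁ := (hnonneg hy hout hsum).lt_of_ne' hne₁
  have h₂ : 0 < φ y₂ := (hnonneg hy.symm (fun b h h' => hout b h' h) (by omega)).lt_of_ne' hne₂
  refine ⟨h₁, ?_⟩
  have h := hφ.dvd_of_lt hσ₁' hσ₂' hdeg hy hout (by omega)
  rwa [← hsum, dvd_add_self_left] at h

end BalancedWeight

theorem conductor_two_primitive_flat_general
    {k : Type*} [Field k] [IsAlgClosed k] (σ₁ σ₂ : k[X])
    (ht₁ : TamelyRamified σ₁) (ht₂ : TamelyRamified σ₂)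
    (hdeg : 14 * σ₂.natDegree ≤ σ₁.natDegree)
    (ν : ℤ) (hν : 1 ≤ ν) (f : RatFunc k) (hf : SemiInvariant σ₁ σ₂ f ν)
    (y₁ y₂ : k) (hy : y₁ ≠ y₂)
    (hsupp : {x : k | ordAt f x ≠ 0} = {y₁, y₂})
    (e e' : ℤ) (he : ordAt f y₁ = e) (he' : ordAt f y₂ = e')
    (hcop : IsCoprime e e') :
    e = -1 ∧ e' = -1 ∧ ν = 2 ∧ ∃ c : k, c ≠ 0 ∧
      f = RatFunc.C c * (algebraMap k[X] (RatFunc k) ((X - C y₁) * (X - C y₂)))⁻¹ := by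
  have hmem (b : k) : ordAt f b ≠ 0 ↔ b = y₁ ∨ b = y₂ := Set.ext_iff.mp hsupp b
  have hout (b : k) (hb₁ : b ≠ y₁) (hb₂ : b ≠ y₂) : ordAt f b = 0 := by
    by_contra h
    exact ((hmem b).mp h).elim hb₁ hb₂
  have he₀ : e ≠ 0 := he ▸ (hmem y₁).mpr (Or.inl rfl)
  have he'₀ : e' ≠ 0 := he' ▸ (hmem y₂).mpr (Or.inr rfl)
  have hsum : e + e' = -ν := by
    have := natDegree_pos_of_not_ringChar_dvd ht₂.1
    rw [← he, ← he', ← intDegree_eq_ordAt_add_ordAt hf.1 hy hout,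
      hf.intDegree_eq_neg ht₁.1 ht₂.1 (by omega)]
  have hσ₁' := derivative_ne_zero_of_not_ringChar_dvd ht₁.1
  have hσ₂' := derivative_ne_zero_of_not_ringChar_dvd ht₂.1
  have hφ := hf.isBalancedWeight ht₁ ht₂
  obtain ⟨hpos₁, hdvd₁⟩ := hφ.pos_and_dvd (ν := ν) hσ₁' hσ₂' (by omega) (by omega) hy
    (fun b hb₁ hb₂ => by simp [hout b hb₁ hb₂]) (by omega) (by omega) (by omega)
  obtain ⟨hpos₂, hdvd₂⟩ := hφ.pos_and_dvd (ν := ν) hσ₁' hσ₂' (by omega) (by omega) hy.symm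
    (fun b hb₂ hb₁ => by simp [hout b hb₁ hb₂]) (by omega) (by omega) (by omega)
  simp only [he, he', show e + ν = -e' by omega, show e' + ν = -e by omega, neg_dvd, dvd_neg]
    at hpos₁ hdvd₁ hpos₂ hdvd₂
  have he₁ : e = -1 := by
    rcases Int.isUnit_iff.mp (hcop.isUnit_of_dvd hdvd₂) with h | h <;> omega
  have he'₁ : e' = -1 := by
    rcases Int.isUnit_iff.mp (hcop.symm.isUnit_of_dvd hdvd₁) with h | h <;> omega
  obtain ⟨c, hc, hfc⟩ := exists_eq_C_mul_zpow_mul_zpow hf.1 hy hout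
  refine ⟨he₁, he'₁, by omega, c, hc, ?_⟩
  rw [hfc, he, he', he₁, he'₁, zpow_neg_one, zpow_neg_one, ← mul_inv, ← map_mul]

/-- if `d₁ ≥ 14·d₂` and a semi-invariant form of weight `ν ≥ 1` has conductor
exactly `2`, with coprime orders `e = ord_{y₁} f` and `e' = ord_{y₂} f` at the two points of
its support, then `e = e' = −1`; consequently `ν = 2` and
`f = c·((t − y₁)(t − y₂))⁻¹` for some nonzero constant `c`. -/
theorem conductor_two_primitive_flat
    {k : Type*} [Field k] [IsAlgClosed k] (σ₁ σ₂ : k[X])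
    (h₁ : 0 < σ₁.natDegree) (h₂ : 0 < σ₂.natDegree)
    (ht₁ : TamelyRamified σ₁) (ht₂ : TamelyRamified σ₂)
    (hdeg : 14 * σ₂.natDegree ≤ σ₁.natDegree)
    (ν : ℤ) (hν : 1 ≤ ν) (f : RatFunc k) (hf : SemiInvariant σ₁ σ₂ f ν)
    (y₁ y₂ : k) (hy : y₁ ≠ y₂)
    (hsupp : {x : k | ordAt f x ≠ 0} = {y₁, y₂})
    (e e' : ℤ) (he : ordAt f y₁ = e) (he' : ordAt f y₂ = e')
    (hcop : IsCoprime e e') :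
    e = -1 ∧ e' = -1 ∧ ν = 2 ∧ ∃ c : k, c ≠ 0 ∧
      f = RatFunc.C c * (algebraMap k[X] (RatFunc k) ((X - C y₁) * (X - C y₂)))⁻¹ :=
  conductor_two_primitive_flat_general σ₁ σ₂ ht₁ ht₂ hdeg ν hν f hf y₁ y₂ hy hsupp e e' he he' hcop
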